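/- arXiv:1902.08770 — 4 statements merged into one kernel-verified Lean document; each statement's English description precedes it below -/
import Mathlib

section
/- Let a = (a_{ij}) be a real symmetric positive definite 2×2 matrix with determinant A = a₁₁a₂₂ − a₁₂² > 0, and write |μ⃗|_a² = a₁₁μ₁² + 2a₁₂μ₁μ₂ + a₂₂μ₂² + A|η|². Then the following integrability identities hold: (i) at every point with μ₁² + |η|² > 0, the partial derivative ∂α₁/∂μ₂ exists and equals √A/(2π|μ⃗|_a²); (ii) at every point with μ₂² + |η|² > 0, ∂α₂/∂μ₁ = √A/(2π|μ⃗|_a²); (iii) at every point with (μ₁−μ₂)² + |η|² > 0, −∂α₃/∂μ₁ − ∂α₃/∂μ₂ = √A/(2π|μ⃗|_a²). -/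
/-
Each `αⱼ` has the shape `(1/(2r)) (1/2 + (1/π) arctan (u/(√A r)))`. In the direction that is
differentiated, `r` is constant and `u` moves affinely with slope `k`, so the derivative is
`k √A / (2π (A r² + u²))`; completing the square gives `A r² + u² = k |μ⃗|_a²`. For `α₃`,
`r` depends only on `μ₁ - μ₂`, so `-∂α₃/∂μ₁ - ∂α₃/∂μ₂` is minus the derivative of `α₃` along the
diagonal direction `(1, 1)`, which is again of this affine kind.
-/

/-- The function `α₁` of the paper. -/
noncomputable def alpha1 (a11 a12 a22 μ1 μ2 : ℝ) (η : ℂ) : ℝ :=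
  (1 / (2 * Real.sqrt (μ1 ^ 2 + a22 * Complex.normSq η))) *
    (1 / 2 + (1 / Real.pi) * Real.arctan ((a22 * μ2 + a12 * μ1) /
      (Real.sqrt (a11 * a22 - a12 ^ 2) * Real.sqrt (μ1 ^ 2 + a22 * Complex.normSq η))))

/-- The function `α₂` of the paper. -/
noncomputable def alpha2 (a11 a12 a22 μ1 μ2 : ℝ) (η : ℂ) : ℝ :=
  (1 / (2 * Real.sqrt (μ2 ^ 2 + a11 * Complex.normSq η))) *
    (1 / 2 + (1 / Real.pi) * Real.arctan ((a11 * μ1 + a12 * μ2) /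
      (Real.sqrt (a11 * a22 - a12 ^ 2) * Real.sqrt (μ2 ^ 2 + a11 * Complex.normSq η))))

/-- The function `α₃` of the paper. -/
noncomputable def alpha3 (a11 a12 a22 μ1 μ2 : ℝ) (η : ℂ) : ℝ :=
  (1 / (2 * Real.sqrt ((μ1 - μ2) ^ 2 + (a11 + 2 * a12 + a22) * Complex.normSq η))) *
    (1 / 2 + (1 / Real.pi) * Real.arctan (-((a11 + a12) * μ1 + (a12 + a22) * μ2) /
      (Real.sqrt (a11 * a22 - a12 ^ 2) *
        Real.sqrt ((μ1 - μ2) ^ 2 + (a11 + 2 * a12 + a22) * Complex.normSq η))))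

open Real

/-- Each `αⱼ` is `alphaProfile √A rⱼ uⱼ`, with `rⱼ` the square root and `uⱼ` the linear form
inside its arctangent. -/
noncomputable def alphaProfile (s r u : ℝ) : ℝ :=
  1 / (2 * r) * (1 / 2 + 1 / π * arctan (u / (s * r)))

/-- The paper's `|μ⃗|_a²`. -/
def aNormSq (a11 a12 a22 μ1 μ2 : ℝ) (η : ℂ) : ℝ :=
  a11 * μ1 ^ 2 + 2 * a12 * μ1 * μ2 + a22 * μ2 ^ 2 + (a11 * a22 - a12 ^ 2) * Complex.normSq η

lemma quadForm_pos {a11 a12 a22 : ℝ} (ha11 : 0 < a11) (hA : 0 < a11 * a22 - a12 ^ 2) {x y : ℝ}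
    (hxy : (x, y) ≠ 0) : 0 < a11 * x ^ 2 + 2 * a12 * x * y + a22 * y ^ 2 := by
  rcases eq_or_ne y 0 with rfl | hy
  · have hx : x ≠ 0 := by simpa using hxy
    simp only [mul_zero, zero_pow two_ne_zero, add_zero]
    positivity
  · refine pos_of_mul_pos_right (a := a11) ?_ ha11.le
    rw [show a11 * (a11 * x ^ 2 + 2 * a12 * x * y + a22 * y ^ 2)
      = (a11 * x + a12 * y) ^ 2 + (a11 * a22 - a12 ^ 2) * y ^ 2 by ring]
    positivity

lemma sq_add_mul_normSq_pos (m : ℝ) {c : ℝ} (hc : 0 < c) (η : ℂ)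
    (h : 0 < m ^ 2 + Complex.normSq η) : 0 < m ^ 2 + c * Complex.normSq η := by
  have hN := Complex.normSq_nonneg η
  rcases le_total c 1 with hc1 | hc1 <;> nlinarith [sq_nonneg m]

lemma hasDerivAt_alphaProfile {s r : ℝ} (hs : s ≠ 0) (hr : r ≠ 0) (u : ℝ) :
    HasDerivAt (alphaProfile s r) (s / (2 * π * (s ^ 2 * r ^ 2 + u ^ 2))) u := by
  have h := ((((hasDerivAt_id' u).div_const (s * r)).arctan.const_mul (1 / π)).const_add
    (1 / 2)).const_mul (1 / (2 * r))
  refine h.congr_deriv ?_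
  field_simp

lemma hasDerivAt_alphaProfile_affine {s r k c Q : ℝ} (t : ℝ) (hs : s ≠ 0) (hr : r ≠ 0)
    (hk : k ≠ 0) (hQ : s ^ 2 * r ^ 2 + (k * t + c) ^ 2 = k * Q) :
    HasDerivAt (fun x => alphaProfile s r (k * x + c)) (s / (2 * π * Q)) t := by
  have hQ0 : Q ≠ 0 := by
    rintro rfl
    have : 0 < s ^ 2 * r ^ 2 := by positivity
    nlinarith [sq_nonneg (k * t + c)]
  have h := (hasDerivAt_alphaProfile hs hr (k * t + c)).comp t
    (((hasDerivAt_id t).const_mul k).add_const c)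
  refine h.congr_deriv ?_
  rw [hQ]
  field_simp

section Partials

variable {F : Type*} [NormedAddCommGroup F] [NormedSpace ℝ F] {f : ℝ × ℝ → F}
  {L : ℝ × ℝ →L[ℝ] F} {x y : ℝ}

lemma HasFDerivAt.hasDerivAt_slice_fst (hf : HasFDerivAt f L (x, y)) :
    HasDerivAt (fun t => f (t, y)) (L (1, 0)) x :=
  hf.comp_hasDerivAt x ((hasDerivAt_id' x).prodMk (hasDerivAt_const x y))

lemma HasFDerivAt.hasDerivAt_slice_snd (hf : HasFDerivAt f L (x, y)) :
    HasDerivAt (fun t => f (x, t)) (L (0, 1)) y :=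
  hf.comp_hasDerivAt y ((hasDerivAt_const y x).prodMk (hasDerivAt_id' y))

lemma HasFDerivAt.hasDerivAt_diagonal (hf : HasFDerivAt f L (x, y)) :
    HasDerivAt (fun t => f (x + t, y + t)) (L (1, 0) + L (0, 1)) 0 := by
  have hγ : HasDerivAt (fun t : ℝ => (x + t, y + t)) (1, 1) 0 :=
    ((hasDerivAt_id' 0).const_add x).prodMk ((hasDerivAt_id' 0).const_add y)
  have hf₀ : HasFDerivAt f L (x + 0, y + 0) := by simpa using hf
  rw [← map_add, Prod.mk_add_mk, add_zero, zero_add]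
  exact hf₀.comp_hasDerivAt 0 hγ

end Partials

section Alphas

variable {a11 a12 a22 : ℝ} (μ1 μ2 : ℝ) (η : ℂ)

lemma hasDerivAt_alpha1 (ha22 : 0 < a22) (hA : 0 < a11 * a22 - a12 ^ 2)
    (h : 0 < μ1 ^ 2 + Complex.normSq η) :
    HasDerivAt (fun t => alpha1 a11 a12 a22 μ1 t η)
      (√(a11 * a22 - a12 ^ 2) / (2 * π * aNormSq a11 a12 a22 μ1 μ2 η)) μ2 := by
  have hr := sq_add_mul_normSq_pos μ1 ha22 η h
  refine hasDerivAt_alphaProfile_affine (k := a22) (c := a12 * μ1) μ2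
    (sqrt_pos.2 hA).ne' (sqrt_pos.2 hr).ne' ha22.ne' ?_
  rw [sq_sqrt hA.le, sq_sqrt hr.le, aNormSq]
  ring

lemma hasDerivAt_alpha2 (ha11 : 0 < a11) (hA : 0 < a11 * a22 - a12 ^ 2)
    (h : 0 < μ2 ^ 2 + Complex.normSq η) :
    HasDerivAt (fun t => alpha2 a11 a12 a22 t μ2 η)
      (√(a11 * a22 - a12 ^ 2) / (2 * π * aNormSq a11 a12 a22 μ1 μ2 η)) μ1 := by
  have hr := sq_add_mul_normSq_pos μ2 ha11 η h
  refine hasDerivAt_alphaProfile_affine (k := a11) (c := a12 * μ2) μ1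
    (sqrt_pos.2 hA).ne' (sqrt_pos.2 hr).ne' ha11.ne' ?_
  rw [sq_sqrt hA.le, sq_sqrt hr.le, aNormSq]
  ring

lemma alpha3_add_add (t : ℝ) :
    alpha3 a11 a12 a22 (μ1 + t) (μ2 + t) η =
      alphaProfile √(a11 * a22 - a12 ^ 2)
        √((μ1 - μ2) ^ 2 + (a11 + 2 * a12 + a22) * Complex.normSq η)
        (-(a11 + 2 * a12 + a22) * t + -((a11 + a12) * μ1 + (a12 + a22) * μ2)) := by
  simp only [alpha3, alphaProfile, add_sub_add_right_eq_sub]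
  ring_nf

lemma differentiableAt_alpha3 (hA : 0 < a11 * a22 - a12 ^ 2)
    (hr : 0 < (μ1 - μ2) ^ 2 + (a11 + 2 * a12 + a22) * Complex.normSq η) :
    DifferentiableAt ℝ (fun p : ℝ × ℝ => alpha3 a11 a12 a22 p.1 p.2 η) (μ1, μ2) := by
  have := differentiable_arctan
  have := hr.ne'
  have := (sqrt_pos.2 hr).ne'
  have := (sqrt_pos.2 hA).ne'
  unfold alpha3
  fun_prop (disch := simp [*])

lemma exists_hasDerivAt_alpha3_neg_sub (hb : 0 < a11 + 2 * a12 + a22)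
    (hA : 0 < a11 * a22 - a12 ^ 2) (h : 0 < (μ1 - μ2) ^ 2 + Complex.normSq η) :
    ∃ d1 d2 : ℝ,
      HasDerivAt (fun t => alpha3 a11 a12 a22 t μ2 η) d1 μ1 ∧
      HasDerivAt (fun t => alpha3 a11 a12 a22 μ1 t η) d2 μ2 ∧
      -d1 - d2 = √(a11 * a22 - a12 ^ 2) / (2 * π * aNormSq a11 a12 a22 μ1 μ2 η) := by
  have hr := sq_add_mul_normSq_pos (μ1 - μ2) hb η h
  have hf := (differentiableAt_alpha3 μ1 μ2 η hA hr).hasFDerivAt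
  refine ⟨_, _, hf.hasDerivAt_slice_fst, hf.hasDerivAt_slice_snd, ?_⟩
  have hdiag : HasDerivAt (fun t => alpha3 a11 a12 a22 (μ1 + t) (μ2 + t) η)
      (√(a11 * a22 - a12 ^ 2) / (2 * π * -aNormSq a11 a12 a22 μ1 μ2 η)) 0 := by
    simp only [alpha3_add_add]
    refine hasDerivAt_alphaProfile_affine 0 (sqrt_pos.2 hA).ne' (sqrt_pos.2 hr).ne'
      (neg_ne_zero.2 hb.ne') ?_
    rw [sq_sqrt hA.le, sq_sqrt hr.le, aNormSq]
    ring
  rw [← neg_add', hf.hasDerivAt_diagonal.unique hdiag, mul_neg, div_neg, neg_neg]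

end Alphas

/-- the integrability identities `∂α₁/∂μ₂ = ∂α₂/∂μ₁ = −∂α₃/∂μ₁ − ∂α₃/∂μ₂
  = √A/(2π|μ⃗|_a²)` away from the respective singular rays. -/
theorem statement2 (a11 a12 a22 : ℝ) (ha11 : 0 < a11) (hA : 0 < a11 * a22 - a12 ^ 2)
    (μ1 μ2 : ℝ) (η : ℂ) :
    (0 < μ1 ^ 2 + Complex.normSq η →
      HasDerivAt (fun t => alpha1 a11 a12 a22 μ1 t η)
        (Real.sqrt (a11 * a22 - a12 ^ 2) /
          (2 * Real.pi * (a11 * μ1 ^ 2 + 2 * a12 * μ1 * μ2 + a22 * μ2 ^ 2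
            + (a11 * a22 - a12 ^ 2) * Complex.normSq η))) μ2) ∧
    (0 < μ2 ^ 2 + Complex.normSq η →
      HasDerivAt (fun t => alpha2 a11 a12 a22 t μ2 η)
        (Real.sqrt (a11 * a22 - a12 ^ 2) /
          (2 * Real.pi * (a11 * μ1 ^ 2 + 2 * a12 * μ1 * μ2 + a22 * μ2 ^ 2
            + (a11 * a22 - a12 ^ 2) * Complex.normSq η))) μ1) ∧
    (0 < (μ1 - μ2) ^ 2 + Complex.normSq η →
      ∃ d1 d2 : ℝ,
        HasDerivAt (fun t => alpha3 a11 a12 a22 t μ2 η) d1 μ1 ∧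
        HasDerivAt (fun t => alpha3 a11 a12 a22 μ1 t η) d2 μ2 ∧
        -d1 - d2 = Real.sqrt (a11 * a22 - a12 ^ 2) /
          (2 * Real.pi * (a11 * μ1 ^ 2 + 2 * a12 * μ1 * μ2 + a22 * μ2 ^ 2
            + (a11 * a22 - a12 ^ 2) * Complex.normSq η))) := by
  have ha22 : 0 < a22 := by
    simpa using quadForm_pos ha11 hA (x := 0) (y := 1) (by simp)
  have hb : 0 < a11 + 2 * a12 + a22 := by
    simpa using quadForm_pos ha11 hA (x := 1) (y := 1) (by simp)
  exact ⟨hasDerivAt_alpha1 μ1 μ2 η ha22 hA, hasDerivAt_alpha2 μ1 μ2 η ha11 hA,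
    exists_hasDerivAt_alpha3_neg_sub μ1 μ2 η hb hA⟩
end

section
/- Let a = (a_{ij}) be a real symmetric positive definite 2×2 matrix with determinant A = a₁₁a₂₂ − a₁₂² > 0. On the open set {(μ₁, μ₂, x, y) ∈ ℝ⁴ : μ₁² + x² + y² > 0}, the function α₁ is smooth and satisfies the Laplace equation a₂₂ ∂²α₁/∂μ₁² − 2a₁₂ ∂²α₁/∂μ₁∂μ₂ + a₁₁ ∂²α₁/∂μ₂² + ∂²α₁/∂x² + ∂²α₁/∂y² = 0 (i.e. α₁ is Δ_a-harmonic away from the discriminant ray 𝔇₁ = {μ₁ = 0, η = 0}). -/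
/-- `α₁` viewed as a function on `ℝ⁴` via `η = x + iy`, with coordinates `(μ₁, μ₂, x, y)`. -/
noncomputable def alpha1R4 (a11 a12 a22 : ℝ) (x : Fin 4 → ℝ) : ℝ :=
  alpha1 a11 a12 a22 (x 0) (x 1) ((x 2 : ℂ) + (x 3 : ℂ) * Complex.I)

/-- The partial derivative in the `i`-th coordinate direction of `ℝ⁴`. -/
noncomputable def pder (i : Fin 4) (φ : (Fin 4 → ℝ) → ℝ) (x : Fin 4 → ℝ) : ℝ :=
  fderiv ℝ φ x (Pi.single i 1)

open Real

noncomputable section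
namespace Stmt3
set_option maxHeartbeats 2000000

/-! ### The two-variable reduction:  `α₁ = φ(Q, N)` with
`Q = μ₁² + a₂₂ (x²+y²)` and `N = a₂₂ μ₂ + a₁₂ μ₁`. -/

def phi (A : ℝ) (p : ℝ × ℝ) : ℝ :=
  (4 * √p.1)⁻¹ + arctan (p.2 * (√A * √p.1)⁻¹) * (2 * π * √p.1)⁻¹

def phiq (A q n : ℝ) : ℝ :=
  -(8 * q * √q)⁻¹ - arctan (n * (√A * √q)⁻¹) * (4 * π * q * √q)⁻¹
    - √A * n * (4 * π * q * (A * q + n ^ 2))⁻¹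

def phin (A q n : ℝ) : ℝ := √A * (2 * π * (A * q + n ^ 2))⁻¹

def phiqq (A q n : ℝ) : ℝ :=
  3 * (16 * q ^ 2 * √q)⁻¹ + 3 * arctan (n * (√A * √q)⁻¹) * (8 * π * q ^ 2 * √q)⁻¹
    + √A * n * (8 * π * q ^ 2 * (A * q + n ^ 2))⁻¹
    + √A * n * (2 * A * q + n ^ 2) * (4 * π * q ^ 2 * (A * q + n ^ 2) ^ 2)⁻¹

def phiqn (A q n : ℝ) : ℝ := -(A * √A) * (2 * π * (A * q + n ^ 2) ^ 2)⁻¹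

def phinn (A q n : ℝ) : ℝ := -(√A * n) * (π * (A * q + n ^ 2) ^ 2)⁻¹

theorem key_identity {A q n : ℝ} (hA : 0 < A) (hq : 0 < q) :
    4 * q * phiqq A q n + A * phinn A q n + 6 * phiq A q n = 0 := by
  have hs : (0:ℝ) < √q := Real.sqrt_pos.2 hq
  have hsA : (0:ℝ) < √A := Real.sqrt_pos.2 hA
  unfold phiqq phinn phiq
  set s := √q with hsdef
  set sA := √A with hsAdef
  have hqs : q = s ^ 2 := by rw [hsdef, Real.sq_sqrt hq.le]
  have hAs : A = sA ^ 2 := by rw [hsAdef, Real.sq_sqrt hA.le]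
  rw [hqs, hAs]
  have hπ : π ≠ 0 := Real.pi_ne_zero
  have hden : sA ^ 2 * s ^ 2 + n ^ 2 ≠ 0 := by positivity
  field_simp
  ring

theorem hasFDerivAt_phi {A q n : ℝ} (hA : 0 < A) (hq : 0 < q) :
    HasFDerivAt (phi A)
      (phiq A q n • ContinuousLinearMap.fst ℝ ℝ ℝ
        + phin A q n • ContinuousLinearMap.snd ℝ ℝ ℝ) (q, n) := by
  have hs : (0:ℝ) < √q := Real.sqrt_pos.2 hq
  have hsA : (0:ℝ) < √A := Real.sqrt_pos.2 hA
  have h1d : HasDerivAt (fun t : ℝ => (4 * √t)⁻¹)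
      (-(4 * (1 / (2 * √q))) / (4 * √q) ^ 2) q :=
    ((Real.hasDerivAt_sqrt hq.ne').const_mul 4).inv (by positivity)
  have h3d : HasDerivAt (fun t : ℝ => (2 * π * √t)⁻¹)
      (-(2 * π * (1 / (2 * √q))) / (2 * π * √q) ^ 2) q :=
    ((Real.hasDerivAt_sqrt hq.ne').const_mul (2 * π)).inv (by positivity)
  have h1 : HasFDerivAt (fun p : ℝ × ℝ => (4 * √p.1)⁻¹)
      ((-(4 * (1 / (2 * √q))) / (4 * √q) ^ 2) • ContinuousLinearMap.fst ℝ ℝ ℝ) (q, n) :=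
    by
      have := h1d.comp_hasFDerivAt (f := (Prod.fst : ℝ × ℝ → ℝ)) (q, n)
        (hasFDerivAt_fst (𝕜 := ℝ) (p := ((q, n) : ℝ × ℝ)))
      exact this
  have h2 : HasFDerivAt (fun p : ℝ × ℝ => (√A * √p.1)⁻¹)
      ((-(√A * (1 / (2 * √q))) / (√A * √q) ^ 2) • ContinuousLinearMap.fst ℝ ℝ ℝ) (q, n) :=
    by
      have := (((Real.hasDerivAt_sqrt hq.ne').const_mul (√A)).inv
        (by positivity)).comp_hasFDerivAt (f := (Prod.fst : ℝ × ℝ → ℝ)) (q, n)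
        (hasFDerivAt_fst (𝕜 := ℝ) (p := ((q, n) : ℝ × ℝ)))
      exact this
  have h3 : HasFDerivAt (fun p : ℝ × ℝ => (2 * π * √p.1)⁻¹)
      ((-(2 * π * (1 / (2 * √q))) / (2 * π * √q) ^ 2) • ContinuousLinearMap.fst ℝ ℝ ℝ) (q, n) :=
    by
      have := h3d.comp_hasFDerivAt (f := (Prod.fst : ℝ × ℝ → ℝ)) (q, n)
        (hasFDerivAt_fst (𝕜 := ℝ) (p := ((q, n) : ℝ × ℝ)))
      exact this
  have hu : HasFDerivAt (fun p : ℝ × ℝ => p.2 * (√A * √p.1)⁻¹)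
      (n • ((-(√A * (1 / (2 * √q))) / (√A * √q) ^ 2) • ContinuousLinearMap.fst ℝ ℝ ℝ)
        + (√A * √q)⁻¹ • ContinuousLinearMap.snd ℝ ℝ ℝ) (q, n) :=
    hasFDerivAt_snd.mul h2
  have hat : HasFDerivAt (fun p : ℝ × ℝ => arctan (p.2 * (√A * √p.1)⁻¹))
      ((1 / (1 + (n * (√A * √q)⁻¹) ^ 2)) •
        (n • ((-(√A * (1 / (2 * √q))) / (√A * √q) ^ 2) • ContinuousLinearMap.fst ℝ ℝ ℝ)
          + (√A * √q)⁻¹ • ContinuousLinearMap.snd ℝ ℝ ℝ)) (q, n) :=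
    (Real.hasDerivAt_arctan _).comp_hasFDerivAt _ hu
  have key := h1.add (hat.mul h3)
  refine key.congr_fderiv ?_
  refine ContinuousLinearMap.ext fun v => ?_
  simp only [ContinuousLinearMap.add_apply, ContinuousLinearMap.smul_apply,
    ContinuousLinearMap.coe_fst', ContinuousLinearMap.coe_snd', smul_eq_mul, phiq, phin]
  set s := √q with hsdef
  set sA := √A with hsAdef
  set T := arctan (n * (sA * s)⁻¹) with hT
  have hqs : q = s ^ 2 := by rw [hsdef, Real.sq_sqrt hq.le]
  have hAs : A = sA ^ 2 := by rw [hsAdef, Real.sq_sqrt hA.le]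
  rw [hqs, hAs]
  have hπ : π ≠ 0 := Real.pi_ne_zero
  have hden : sA ^ 2 * s ^ 2 + n ^ 2 ≠ 0 := by positivity
  field_simp
  ring

theorem hasFDerivAt_phin {A q n : ℝ} (hA : 0 < A) (hq : 0 < q) :
    HasFDerivAt (fun p : ℝ × ℝ => phin A p.1 p.2)
      (phiqn A q n • ContinuousLinearMap.fst ℝ ℝ ℝ
        + phinn A q n • ContinuousLinearMap.snd ℝ ℝ ℝ) (q, n) := by
  have hsA : (0:ℝ) < √A := Real.sqrt_pos.2 hA
  have hden : (0:ℝ) < A * q + n ^ 2 := by positivity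
  have hw : HasFDerivAt (fun p : ℝ × ℝ => 2 * π * (A * p.1 + p.2 ^ 2))
      ((2 * π) • (A • ContinuousLinearMap.fst ℝ ℝ ℝ
        + (n • ((1:ℝ) • ContinuousLinearMap.snd ℝ ℝ ℝ)
        + n • ((1:ℝ) • ContinuousLinearMap.snd ℝ ℝ ℝ)))) (q, n) := by
    have h2 : HasFDerivAt (fun p : ℝ × ℝ => p.2 ^ 2)
        (n • ((1:ℝ) • ContinuousLinearMap.snd ℝ ℝ ℝ)
          + n • ((1:ℝ) • ContinuousLinearMap.snd ℝ ℝ ℝ)) (q, n) := by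
      have := (hasFDerivAt_snd (𝕜 := ℝ) (p := ((q, n) : ℝ × ℝ))).mul
        (hasFDerivAt_snd (𝕜 := ℝ) (p := ((q, n) : ℝ × ℝ)))
      simp only [← sq] at this
      simp only [one_smul]; exact this
    exact ((hasFDerivAt_fst.const_mul A).add h2).const_mul (2 * π)
  have hinv := (hasDerivAt_inv (x := 2 * π * (A * q + n ^ 2))
      (by positivity)).comp_hasFDerivAt (q, n) hw
  have key := hinv.const_mul (√A)
  refine key.congr_fderiv ?_
  refine ContinuousLinearMap.ext fun v => ?_
  simp only [ContinuousLinearMap.add_apply, ContinuousLinearMap.smul_apply,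
    ContinuousLinearMap.coe_fst', ContinuousLinearMap.coe_snd', smul_eq_mul, phiqn, phinn]
  set sA := √A with hsAdef
  have hAs : A = sA ^ 2 := by rw [hsAdef, Real.sq_sqrt hA.le]
  rw [hAs]
  have hπ : π ≠ 0 := Real.pi_ne_zero
  have hden' : sA ^ 2 * q + n ^ 2 ≠ 0 := by rw [hAs] at hden; positivity
  field_simp
  ring

theorem hasFDerivAt_phiq {A q n : ℝ} (hA : 0 < A) (hq : 0 < q) :
    HasFDerivAt (fun p : ℝ × ℝ => phiq A p.1 p.2)
      (phiqq A q n • ContinuousLinearMap.fst ℝ ℝ ℝ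
        + phiqn A q n • ContinuousLinearMap.snd ℝ ℝ ℝ) (q, n) := by
  have hs : (0:ℝ) < √q := Real.sqrt_pos.2 hq
  have hsA : (0:ℝ) < √A := Real.sqrt_pos.2 hA
  have hden : (0:ℝ) < A * q + n ^ 2 := by positivity
  have hts : HasDerivAt (fun t : ℝ => t * √t) (1 * √q + q * (1 / (2 * √q))) q :=
    (hasDerivAt_id q).mul (Real.hasDerivAt_sqrt hq.ne')
  have hP1 : HasFDerivAt (fun p : ℝ × ℝ => (8 * (p.1 * √p.1))⁻¹)
      ((-(8 * (1 * √q + q * (1 / (2 * √q)))) / (8 * (q * √q)) ^ 2)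
        • ContinuousLinearMap.fst ℝ ℝ ℝ) (q, n) :=
    ((hts.const_mul 8).inv (by positivity)).comp_hasFDerivAt (f := Prod.fst) (q, n) hasFDerivAt_fst
  have h2 : HasFDerivAt (fun p : ℝ × ℝ => (√A * √p.1)⁻¹)
      ((-(√A * (1 / (2 * √q))) / (√A * √q) ^ 2) • ContinuousLinearMap.fst ℝ ℝ ℝ) (q, n) :=
    (((Real.hasDerivAt_sqrt hq.ne').const_mul (√A)).inv (by positivity)).comp_hasFDerivAt
      (f := Prod.fst) (q, n) hasFDerivAt_fst
  have hu : HasFDerivAt (fun p : ℝ × ℝ => p.2 * (√A * √p.1)⁻¹)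
      (n • ((-(√A * (1 / (2 * √q))) / (√A * √q) ^ 2) • ContinuousLinearMap.fst ℝ ℝ ℝ)
        + (√A * √q)⁻¹ • ContinuousLinearMap.snd ℝ ℝ ℝ) (q, n) := hasFDerivAt_snd.mul h2
  have hat : HasFDerivAt (fun p : ℝ × ℝ => arctan (p.2 * (√A * √p.1)⁻¹))
      ((1 / (1 + (n * (√A * √q)⁻¹) ^ 2)) •
        (n • ((-(√A * (1 / (2 * √q))) / (√A * √q) ^ 2) • ContinuousLinearMap.fst ℝ ℝ ℝ)
          + (√A * √q)⁻¹ • ContinuousLinearMap.snd ℝ ℝ ℝ)) (q, n) :=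
    (Real.hasDerivAt_arctan _).comp_hasFDerivAt (q, n) hu
  have hP2b : HasFDerivAt (fun p : ℝ × ℝ => (4 * π * (p.1 * √p.1))⁻¹)
      ((-(4 * π * (1 * √q + q * (1 / (2 * √q)))) / (4 * π * (q * √q)) ^ 2)
        • ContinuousLinearMap.fst ℝ ℝ ℝ) (q, n) :=
    by
      have := ((hts.const_mul (4 * π)).inv (by positivity)).comp_hasFDerivAt
        (f := (Prod.fst : ℝ × ℝ → ℝ)) (q, n) (hasFDerivAt_fst (𝕜 := ℝ) (p := ((q, n) : ℝ × ℝ)))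
      exact this
  have hsq2 : HasFDerivAt (fun p : ℝ × ℝ => p.2 ^ 2)
      (n • ((1:ℝ) • ContinuousLinearMap.snd ℝ ℝ ℝ)
        + n • ((1:ℝ) • ContinuousLinearMap.snd ℝ ℝ ℝ)) (q, n) := by
    have := (hasFDerivAt_snd (𝕜 := ℝ) (p := ((q, n) : ℝ × ℝ))).mul
      (hasFDerivAt_snd (𝕜 := ℝ) (p := ((q, n) : ℝ × ℝ)))
    simp only [← sq] at this
    simp only [one_smul]; exact this
  have hAq : HasFDerivAt (fun p : ℝ × ℝ => A * p.1 + p.2 ^ 2)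
      (A • ContinuousLinearMap.fst ℝ ℝ ℝ
        + (n • ((1:ℝ) • ContinuousLinearMap.snd ℝ ℝ ℝ)
          + n • ((1:ℝ) • ContinuousLinearMap.snd ℝ ℝ ℝ))) (q, n) :=
    (hasFDerivAt_fst.const_mul A).add hsq2
  have h4pq : HasFDerivAt (fun p : ℝ × ℝ => 4 * π * p.1)
      ((4 * π) • ContinuousLinearMap.fst ℝ ℝ ℝ) (q, n) := hasFDerivAt_fst.const_mul (4 * π)
  have hw4 := h4pq.mul hAq
  have hw4inv := (hasDerivAt_inv
      (x := 4 * π * q * (A * q + n ^ 2)) (by positivity)).comp_hasFDerivAt (q, n) hw4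
  have hsnd : HasFDerivAt (fun p : ℝ × ℝ => √A * p.2)
      (√A • ContinuousLinearMap.snd ℝ ℝ ℝ) (q, n) := hasFDerivAt_snd.const_mul (√A)
  have hT3 := hsnd.mul hw4inv
  have key := ((hP1.neg).sub ((hat.mul hP2b))).sub hT3
  have hfun : (fun p : ℝ × ℝ => phiq A p.1 p.2)
      = fun p : ℝ × ℝ => -(8 * (p.1 * √p.1))⁻¹
        - arctan (p.2 * (√A * √p.1)⁻¹) * (4 * π * (p.1 * √p.1))⁻¹
        - √A * p.2 * (4 * π * p.1 * (A * p.1 + p.2 ^ 2))⁻¹ := by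
    funext p; unfold phiq; ring_nf
  rw [hfun]
  refine key.congr_fderiv ?_
  refine ContinuousLinearMap.ext fun v => ?_
  simp only [ContinuousLinearMap.add_apply, ContinuousLinearMap.smul_apply,
    ContinuousLinearMap.sub_apply, ContinuousLinearMap.neg_apply,
    ContinuousLinearMap.coe_fst', ContinuousLinearMap.coe_snd', smul_eq_mul, phiqq, phiqn,
    Function.comp_apply, Pi.mul_apply]
  set s := √q with hsdef
  set sA := √A with hsAdef
  set T := arctan (n * (sA * s)⁻¹) with hT
  have hqs : q = s ^ 2 := by rw [hsdef, Real.sq_sqrt hq.le]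
  have hAs : A = sA ^ 2 := by rw [hsAdef, Real.sq_sqrt hA.le]
  rw [hqs, hAs]
  have hπ : π ≠ 0 := Real.pi_ne_zero
  have hden' : sA ^ 2 * s ^ 2 + n ^ 2 ≠ 0 := by positivity
  field_simp
  ring

/-! ### The `ℝ⁴` layer. -/

def QQ (a22 : ℝ) (p : Fin 4 → ℝ) : ℝ := p 0 ^ 2 + a22 * (p 2 ^ 2 + p 3 ^ 2)

def NN (a12 a22 : ℝ) (p : Fin 4 → ℝ) : ℝ := a22 * p 1 + a12 * p 0

abbrev prj (i : Fin 4) : (Fin 4 → ℝ) →L[ℝ] ℝ :=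
  ContinuousLinearMap.proj (R := ℝ) (φ := fun _ : Fin 4 => ℝ) i

def dQQ (a22 : ℝ) (x : Fin 4 → ℝ) : (Fin 4 → ℝ) →L[ℝ] ℝ :=
  (x 0 • prj 0 + x 0 • prj 0)
    + a22 • ((x 2 • prj 2 + x 2 • prj 2) + (x 3 • prj 3 + x 3 • prj 3))

def dNN (a12 a22 : ℝ) : (Fin 4 → ℝ) →L[ℝ] ℝ := a22 • prj 1 + a12 • prj 0

theorem hasFDerivAt_proj (i : Fin 4) (x : Fin 4 → ℝ) :
    HasFDerivAt (fun p : Fin 4 → ℝ => p i) (prj i) x := (prj i).hasFDerivAt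

theorem hasFDerivAt_QQ (a22 : ℝ) (x : Fin 4 → ℝ) :
    HasFDerivAt (QQ a22) (dQQ a22 x) x := by
  have h0 := (hasFDerivAt_proj 0 x).mul (hasFDerivAt_proj 0 x)
  have h2 := (hasFDerivAt_proj 2 x).mul (hasFDerivAt_proj 2 x)
  have h3 := (hasFDerivAt_proj 3 x).mul (hasFDerivAt_proj 3 x)
  have key := h0.add ((h2.add h3).const_mul a22)
  simp only [← sq] at key
  exact key

theorem hasFDerivAt_NN (a12 a22 : ℝ) (x : Fin 4 → ℝ) :
    HasFDerivAt (NN a12 a22) (dNN a12 a22) x :=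
  ((hasFDerivAt_proj 1 x).const_mul a22).add ((hasFDerivAt_proj 0 x).const_mul a12)

theorem alpha1R4_eq (a11 a12 a22 : ℝ) :
    alpha1R4 a11 a12 a22
      = (phi (a11 * a22 - a12 ^ 2)) ∘ fun p => (QQ a22 p, NN a12 a22 p) := by
  funext p
  simp only [alpha1R4, alpha1, phi, Function.comp, QQ, NN, Complex.normSq_add_mul_I]
  rw [div_eq_mul_inv]
  ring

section main
variable {a11 a12 a22 : ℝ}

theorem hasFDerivAt_alpha (hA : 0 < a11 * a22 - a12 ^ 2) {x : Fin 4 → ℝ}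
    (hQ : 0 < QQ a22 x) :
    HasFDerivAt (alpha1R4 a11 a12 a22)
      ((phiq (a11 * a22 - a12 ^ 2) (QQ a22 x) (NN a12 a22 x) • ContinuousLinearMap.fst ℝ ℝ ℝ
          + phin (a11 * a22 - a12 ^ 2) (QQ a22 x) (NN a12 a22 x) • ContinuousLinearMap.snd ℝ ℝ ℝ).comp
        ((dQQ a22 x).prod (dNN a12 a22))) x := by
  rw [alpha1R4_eq]
  exact (hasFDerivAt_phi hA hQ).comp x
    (HasFDerivAt.prodMk (hasFDerivAt_QQ a22 x) (hasFDerivAt_NN a12 a22 x))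

def G0 (a11 a12 a22 : ℝ) (p : Fin 4 → ℝ) : ℝ :=
  phiq (a11 * a22 - a12 ^ 2) (QQ a22 p) (NN a12 a22 p) * (2 * p 0)
    + phin (a11 * a22 - a12 ^ 2) (QQ a22 p) (NN a12 a22 p) * a12

def G1 (a11 a12 a22 : ℝ) (p : Fin 4 → ℝ) : ℝ :=
  phin (a11 * a22 - a12 ^ 2) (QQ a22 p) (NN a12 a22 p) * a22

def G2 (a11 a12 a22 : ℝ) (p : Fin 4 → ℝ) : ℝ :=
  phiq (a11 * a22 - a12 ^ 2) (QQ a22 p) (NN a12 a22 p) * (2 * a22 * p 2)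

def G3 (a11 a12 a22 : ℝ) (p : Fin 4 → ℝ) : ℝ :=
  phiq (a11 * a22 - a12 ^ 2) (QQ a22 p) (NN a12 a22 p) * (2 * a22 * p 3)

theorem pder0_alpha (hA : 0 < a11 * a22 - a12 ^ 2) {x : Fin 4 → ℝ} (hQ : 0 < QQ a22 x) :
    pder 0 (alpha1R4 a11 a12 a22) x = G0 a11 a12 a22 x := by
  rw [pder, (hasFDerivAt_alpha hA hQ).fderiv]
  simp [dQQ, dNN, G0, Pi.single_apply]
  ring

theorem pder1_alpha (hA : 0 < a11 * a22 - a12 ^ 2) {x : Fin 4 → ℝ} (hQ : 0 < QQ a22 x) :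
    pder 1 (alpha1R4 a11 a12 a22) x = G1 a11 a12 a22 x := by
  rw [pder, (hasFDerivAt_alpha hA hQ).fderiv]
  simp [dQQ, dNN, G1, Pi.single_apply]

theorem pder2_alpha (hA : 0 < a11 * a22 - a12 ^ 2) {x : Fin 4 → ℝ} (hQ : 0 < QQ a22 x) :
    pder 2 (alpha1R4 a11 a12 a22) x = G2 a11 a12 a22 x := by
  rw [pder, (hasFDerivAt_alpha hA hQ).fderiv]
  simp [dQQ, dNN, G2, Pi.single_apply]
  ring

theorem pder3_alpha (hA : 0 < a11 * a22 - a12 ^ 2) {x : Fin 4 → ℝ} (hQ : 0 < QQ a22 x) :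
    pder 3 (alpha1R4 a11 a12 a22) x = G3 a11 a12 a22 x := by
  rw [pder, (hasFDerivAt_alpha hA hQ).fderiv]
  simp [dQQ, dNN, G3, Pi.single_apply]
  ring

theorem hasFDerivAt_phiq_comp (hA : 0 < a11 * a22 - a12 ^ 2) {x : Fin 4 → ℝ}
    (hQ : 0 < QQ a22 x) :
    HasFDerivAt (fun p => phiq (a11 * a22 - a12 ^ 2) (QQ a22 p) (NN a12 a22 p))
      ((phiqq (a11 * a22 - a12 ^ 2) (QQ a22 x) (NN a12 a22 x) • ContinuousLinearMap.fst ℝ ℝ ℝ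
          + phiqn (a11 * a22 - a12 ^ 2) (QQ a22 x) (NN a12 a22 x) • ContinuousLinearMap.snd ℝ ℝ ℝ).comp
        ((dQQ a22 x).prod (dNN a12 a22))) x :=
  by
    have := (hasFDerivAt_phiq (n := NN a12 a22 x) hA hQ).comp x
      (HasFDerivAt.prodMk (hasFDerivAt_QQ a22 x) (hasFDerivAt_NN a12 a22 x))
    exact this

theorem hasFDerivAt_phin_comp (hA : 0 < a11 * a22 - a12 ^ 2) {x : Fin 4 → ℝ}
    (hQ : 0 < QQ a22 x) :
    HasFDerivAt (fun p => phin (a11 * a22 - a12 ^ 2) (QQ a22 p) (NN a12 a22 p))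
      ((phiqn (a11 * a22 - a12 ^ 2) (QQ a22 x) (NN a12 a22 x) • ContinuousLinearMap.fst ℝ ℝ ℝ
          + phinn (a11 * a22 - a12 ^ 2) (QQ a22 x) (NN a12 a22 x) • ContinuousLinearMap.snd ℝ ℝ ℝ).comp
        ((dQQ a22 x).prod (dNN a12 a22))) x :=
  by
    have := (hasFDerivAt_phin (n := NN a12 a22 x) hA hQ).comp x
      (HasFDerivAt.prodMk (hasFDerivAt_QQ a22 x) (hasFDerivAt_NN a12 a22 x))
    exact this

theorem pde (ha11 : 0 < a11) (hA : 0 < a11 * a22 - a12 ^ 2)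
    (ha22 : 0 < a22) {x : Fin 4 → ℝ}
    (hx : 0 < x 0 ^ 2 + x 2 ^ 2 + x 3 ^ 2) :
      a22 * pder 0 (pder 0 (alpha1R4 a11 a12 a22)) x
        - 2 * a12 * pder 0 (pder 1 (alpha1R4 a11 a12 a22)) x
        + a11 * pder 1 (pder 1 (alpha1R4 a11 a12 a22)) x
        + pder 2 (pder 2 (alpha1R4 a11 a12 a22)) x
        + pder 3 (pder 3 (alpha1R4 a11 a12 a22)) x = 0 := by
  have hQpos : ∀ p : Fin 4 → ℝ, 0 < p 0 ^ 2 + p 2 ^ 2 + p 3 ^ 2 → 0 < QQ a22 p := by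
    intro p hp
    unfold QQ
    have hd : 0 < p 0 ^ 2 ∨ 0 < p 2 ^ 2 + p 3 ^ 2 := by
      by_contra h
      push_neg at h
      linarith [h.1, h.2]
    rcases hd with h | h
    · nlinarith [mul_nonneg ha22.le (add_nonneg (sq_nonneg (p 2)) (sq_nonneg (p 3)))]
    · nlinarith [mul_pos ha22 h, sq_nonneg (p 0)]
  have hQ : 0 < QQ a22 x := hQpos x hx
  have hopen : IsOpen {p : Fin 4 → ℝ | 0 < QQ a22 p} := by
    apply isOpen_lt continuous_const
    unfold QQ; fun_prop
  have hmem : {p : Fin 4 → ℝ | 0 < QQ a22 p} ∈ nhds x := hopen.mem_nhds hQ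
  -- second derivatives
  have hlin0 : HasFDerivAt (fun p : Fin 4 → ℝ => 2 * p 0) ((2:ℝ) • prj 0) x :=
    (hasFDerivAt_proj 0 x).const_mul 2
  have hlin2 : HasFDerivAt (fun p : Fin 4 → ℝ => 2 * a22 * p 2) ((2 * a22) • prj 2) x :=
    (hasFDerivAt_proj 2 x).const_mul (2 * a22)
  have hlin3 : HasFDerivAt (fun p : Fin 4 → ℝ => 2 * a22 * p 3) ((2 * a22) • prj 3) x :=
    (hasFDerivAt_proj 3 x).const_mul (2 * a22)
  have hG0 := ((hasFDerivAt_phiq_comp hA hQ).mul hlin0).add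
    ((hasFDerivAt_phin_comp hA hQ).mul_const a12)
  have hG1 := (hasFDerivAt_phin_comp hA hQ).mul_const a22
  have hG2 := (hasFDerivAt_phiq_comp hA hQ).mul hlin2
  have hG3 := (hasFDerivAt_phiq_comp hA hQ).mul hlin3
  have hev : ∀ i : Fin 4, ∀ G : (Fin 4 → ℝ) → ℝ,
      (∀ p, 0 < QQ a22 p → pder i (alpha1R4 a11 a12 a22) p = G p) →
      pder i (alpha1R4 a11 a12 a22) =ᶠ[nhds x] G := by
    intro i G h
    exact Filter.eventuallyEq_of_mem hmem fun p hp => h p hp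
  have hev0 := hev 0 _ fun p hp => pder0_alpha hA hp
  have hev1 := hev 1 _ fun p hp => pder1_alpha hA hp
  have hev2 := hev 2 _ fun p hp => pder2_alpha hA hp
  have hev3 := hev 3 _ fun p hp => pder3_alpha hA hp
  have h00 : pder 0 (pder 0 (alpha1R4 a11 a12 a22)) x
      = (phiqq (a11 * a22 - a12 ^ 2) (QQ a22 x) (NN a12 a22 x) * (2 * x 0)
          + phiqn (a11 * a22 - a12 ^ 2) (QQ a22 x) (NN a12 a22 x) * a12) * (2 * x 0)
        + phiq (a11 * a22 - a12 ^ 2) (QQ a22 x) (NN a12 a22 x) * 2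
        + (phiqn (a11 * a22 - a12 ^ 2) (QQ a22 x) (NN a12 a22 x) * (2 * x 0)
          + phinn (a11 * a22 - a12 ^ 2) (QQ a22 x) (NN a12 a22 x) * a12) * a12 := by
    rw [pder, hev0.fderiv_eq]
    unfold G0
    erw [hG0.fderiv]
    simp [G0, dQQ, dNN, Pi.single_apply]
    ring
  have h01 : pder 0 (pder 1 (alpha1R4 a11 a12 a22)) x
      = (phiqn (a11 * a22 - a12 ^ 2) (QQ a22 x) (NN a12 a22 x) * (2 * x 0)
          + phinn (a11 * a22 - a12 ^ 2) (QQ a22 x) (NN a12 a22 x) * a12) * a22 := by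
    rw [pder, hev1.fderiv_eq]
    unfold G1
    rw [hG1.fderiv]
    simp [G1, dQQ, dNN, Pi.single_apply]
    ring
  have h11 : pder 1 (pder 1 (alpha1R4 a11 a12 a22)) x
      = phinn (a11 * a22 - a12 ^ 2) (QQ a22 x) (NN a12 a22 x) * a22 * a22 := by
    rw [pder, hev1.fderiv_eq]
    unfold G1
    rw [hG1.fderiv]
    simp [G1, dQQ, dNN, Pi.single_apply]
    ring
  have h22 : pder 2 (pder 2 (alpha1R4 a11 a12 a22)) x
      = phiqq (a11 * a22 - a12 ^ 2) (QQ a22 x) (NN a12 a22 x) * (2 * a22 * x 2) * (2 * a22 * x 2)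
        + phiq (a11 * a22 - a12 ^ 2) (QQ a22 x) (NN a12 a22 x) * (2 * a22) := by
    rw [pder, hev2.fderiv_eq]
    unfold G2
    erw [hG2.fderiv]
    simp [G2, dQQ, dNN, Pi.single_apply]
    ring
  have h33 : pder 3 (pder 3 (alpha1R4 a11 a12 a22)) x
      = phiqq (a11 * a22 - a12 ^ 2) (QQ a22 x) (NN a12 a22 x) * (2 * a22 * x 3) * (2 * a22 * x 3)
        + phiq (a11 * a22 - a12 ^ 2) (QQ a22 x) (NN a12 a22 x) * (2 * a22) := by
    rw [pder, hev3.fderiv_eq]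
    unfold G3
    erw [hG3.fderiv]
    simp [G3, dQQ, dNN, Pi.single_apply]
    ring
  rw [h00, h01, h11, h22, h33]
  have hkey := key_identity (n := NN a12 a22 x) hA hQ
  simp only [QQ] at hkey ⊢
  linear_combination a22 * hkey

end main

theorem contDiffAt_phi {A : ℝ} (hA : 0 < A) {w : ℝ × ℝ} (hw : 0 < w.1) :
    ContDiffAt ℝ (⊤ : WithTop ℕ∞) (phi A) w := by
  have hs : (0:ℝ) < √w.1 := Real.sqrt_pos.2 hw
  have hsA : (0:ℝ) < √A := Real.sqrt_pos.2 hA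
  have h1 : ContDiffAt ℝ (⊤ : WithTop ℕ∞) (fun p : ℝ × ℝ => √p.1) w :=
    (Real.contDiffAt_sqrt hw.ne').comp w contDiffAt_fst
  have hinv4 : ContDiffAt ℝ (⊤ : WithTop ℕ∞) (fun p : ℝ × ℝ => (4 * √p.1)⁻¹) w :=
    (contDiffAt_const.mul h1).inv (by positivity)
  have hinvA : ContDiffAt ℝ (⊤ : WithTop ℕ∞) (fun p : ℝ × ℝ => (√A * √p.1)⁻¹) w :=
    (contDiffAt_const.mul h1).inv (by positivity)
  have hinv2pi : ContDiffAt ℝ (⊤ : WithTop ℕ∞) (fun p : ℝ × ℝ => (2 * π * √p.1)⁻¹) w :=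
    (contDiffAt_const.mul h1).inv (by positivity)
  have harg : ContDiffAt ℝ (⊤ : WithTop ℕ∞) (fun p : ℝ × ℝ => p.2 * (√A * √p.1)⁻¹) w :=
    contDiffAt_snd.mul hinvA
  have hat : ContDiffAt ℝ (⊤ : WithTop ℕ∞)
      (fun p : ℝ × ℝ => arctan (p.2 * (√A * √p.1)⁻¹)) w :=
    (Real.contDiff_arctan.contDiffAt).comp w harg
  exact hinv4.add (hat.mul hinv2pi)

theorem contDiff_mm (a12 a22 : ℝ) : ContDiff ℝ (⊤ : WithTop ℕ∞)
    (fun p : Fin 4 → ℝ => (QQ a22 p, NN a12 a22 p)) := by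
  unfold QQ NN; fun_prop

theorem QQ_pos {a22 : ℝ} (ha22 : 0 < a22) {p : Fin 4 → ℝ}
    (hp : 0 < p 0 ^ 2 + p 2 ^ 2 + p 3 ^ 2) : 0 < QQ a22 p := by
  unfold QQ
  have hd : 0 < p 0 ^ 2 ∨ 0 < p 2 ^ 2 + p 3 ^ 2 := by
    by_contra h
    push_neg at h
    linarith [h.1, h.2]
  rcases hd with h | h
  · nlinarith [mul_nonneg ha22.le (add_nonneg (sq_nonneg (p 2)) (sq_nonneg (p 3)))]
  · nlinarith [mul_pos ha22 h, sq_nonneg (p 0)]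

end Stmt3

/-- away from the ray `𝔇₁ = {μ₁ = 0, η = 0}`, the function `α₁` is smooth and
`Δ_a`-harmonic: `a₂₂ ∂²α₁/∂μ₁² − 2a₁₂ ∂²α₁/∂μ₁∂μ₂ + a₁₁ ∂²α₁/∂μ₂² + ∂²α₁/∂x² + ∂²α₁/∂y² = 0`. -/
theorem statement3 (a11 a12 a22 : ℝ) (ha11 : 0 < a11) (hA : 0 < a11 * a22 - a12 ^ 2) :
    ContDiffOn ℝ (⊤ : ℕ∞) (alpha1R4 a11 a12 a22)
      {x : Fin 4 → ℝ | 0 < (x 0) ^ 2 + (x 2) ^ 2 + (x 3) ^ 2} ∧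
    ∀ x ∈ {x : Fin 4 → ℝ | 0 < (x 0) ^ 2 + (x 2) ^ 2 + (x 3) ^ 2},
      a22 * pder 0 (pder 0 (alpha1R4 a11 a12 a22)) x
        - 2 * a12 * pder 0 (pder 1 (alpha1R4 a11 a12 a22)) x
        + a11 * pder 1 (pder 1 (alpha1R4 a11 a12 a22)) x
        + pder 2 (pder 2 (alpha1R4 a11 a12 a22)) x
        + pder 3 (pder 3 (alpha1R4 a11 a12 a22)) x = 0 := by
  have ha22 : 0 < a22 := by nlinarith [sq_nonneg a12]
  constructor
  · rw [Stmt3.alpha1R4_eq]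
    intro x hx
    refine ContDiffAt.contDiffWithinAt ?_
    refine ContDiffAt.comp x ((Stmt3.contDiffAt_phi (w := (Stmt3.QQ a22 x, Stmt3.NN a12 a22 x)) hA (Stmt3.QQ_pos ha22 hx)).of_le le_top) ?_
    exact (Stmt3.contDiff_mm a12 a22).contDiffAt.of_le le_top
  · intro x hx
    exact Stmt3.pde ha11 hA ha22 hx
end
end

section
/- For every real number y ≠ 0, the limit lim_{N→∞} ( ∫₀^N dx/√(x² + y²) − Σ_{n=1}^N 1/n ) exists and equals log(2/|y|) − γ_E, where γ_E is the Euler–Mascheroni constant. (This evaluates the Fourier average ᾱ₁ on the axis μ₁ = μ₂ = 0 and pins down the additive constant in the leading order asymptote.) -/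
/-!
The integrand has the primitive `arsinh (x / |y|)`, so the integral equals `arsinh (N / |y|)`.
Since `arsinh t = log (t + √(1 + t²)) = log (2t) + o(1)` as `t → ∞`, the difference is
`log 2 - log |y| - (H_N - log N) + o(1)`, and `H_N - log N → γ_E`.
-/

open Filter Real Topology

lemma sqrt_one_add_div_sq_mul {c : ℝ} (hc : 0 < c) (t : ℝ) :
    √(1 + (t / c) ^ 2) * c = √(t ^ 2 + c ^ 2) := by
  rw [← sqrt_sq hc.le, ← sqrt_mul (by positivity), sqrt_sq hc.le]
  congr 1
  field_simp
  ring

lemma hasDerivAt_arsinh_div_abs {a : ℝ} (ha : a ≠ 0) (x : ℝ) :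
    HasDerivAt (fun t => arsinh (t / |a|)) (√(x ^ 2 + a ^ 2))⁻¹ x := by
  refine ((hasDerivAt_id x).div_const |a|).arsinh.congr_deriv ?_
  rw [← sq_abs a, ← sqrt_one_add_div_sq_mul (abs_pos.mpr ha), id, mul_inv, one_div]
  ring

lemma integral_inv_sqrt_sq_add_sq {a : ℝ} (ha : a ≠ 0) (b c : ℝ) :
    ∫ x in b..c, (√(x ^ 2 + a ^ 2))⁻¹ = arsinh (c / |a|) - arsinh (b / |a|) := by
  have hcont : Continuous fun x : ℝ => (√(x ^ 2 + a ^ 2))⁻¹ :=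
    (by fun_prop : Continuous fun x : ℝ => √(x ^ 2 + a ^ 2)).inv₀ fun x => by positivity
  exact intervalIntegral.integral_eq_sub_of_hasDerivAt
    (fun x _ => hasDerivAt_arsinh_div_abs ha x) (hcont.intervalIntegrable _ _)

lemma tendsto_arsinh_sub_log_atTop :
    Tendsto (fun t => arsinh t - log t) atTop (𝓝 (log 2)) := by
  have hlim : Tendsto (fun t : ℝ => log (1 + √(1 + (1 / t) ^ 2))) atTop (𝓝 (log 2)) := by
    have h0 : Tendsto (fun t : ℝ => 1 / t) atTop (𝓝 0) := tendsto_const_nhds.div_atTop tendsto_id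
    have h := (h0.pow 2).const_add 1 |>.sqrt.const_add 1
      |>.log (by norm_num : (1 : ℝ) + √(1 + 0 ^ 2) ≠ 0)
    convert h using 2
    norm_num
  refine hlim.congr' ?_
  filter_upwards [eventually_gt_atTop 0] with t ht
  have hsqrt : √(1 + (1 / t) ^ 2) * t = √(1 + t ^ 2) := by
    rw [sqrt_one_add_div_sq_mul ht, one_pow, add_comm]
  rw [arsinh, eq_sub_iff_add_eq, ← log_mul (by positivity) ht.ne', ← hsqrt]
  congr 1
  ring

/-- for `y ≠ 0`,
`lim_{N→∞} (∫₀^N dx/√(x² + y²) − Σ_{n=1}^N 1/n) = log(2/|y|) − γ_E`. -/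
theorem statement8 (y : ℝ) (hy : y ≠ 0) :
    Filter.Tendsto (fun N : ℕ =>
      (∫ x in (0 : ℝ)..(N : ℝ), (Real.sqrt (x ^ 2 + y ^ 2))⁻¹)
        - ∑ n ∈ Finset.Icc 1 N, (1 : ℝ) / n)
      Filter.atTop (nhds (Real.log (2 / |y|) - Real.eulerMascheroniConstant)) := by
  have hy' : 0 < |y| := abs_pos.mpr hy
  have hlim := ((tendsto_arsinh_sub_log_atTop.comp
    (tendsto_natCast_atTop_atTop.atTop_div_const hy')).sub_const (log |y|)).sub
    tendsto_harmonic_sub_log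
  rw [log_div two_ne_zero hy'.ne']
  refine hlim.congr' ?_
  filter_upwards [eventually_gt_atTop 0] with N hN
  have hN : (N : ℝ) ≠ 0 := by positivity
  simp only [Function.comp_apply, integral_inv_sqrt_sq_add_sq hy, zero_div, arsinh_zero,
    sub_zero, harmonic_eq_sum_Icc, Rat.cast_sum, Rat.cast_inv, Rat.cast_natCast, one_div,
    log_div hN hy'.ne']
  ring
end

section
/- Let I ⊆ ℝ be an open interval and let p₁, p₂, p₃ : I → ℝ be functions with pᵢ(λ) > 0 for all λ ∈ I, which solve the renormalisation flow equation in the form: for every λ ∈ I and every cyclic permutation (i, j, k) of (1, 2, 3), pᵢ has derivative −(pⱼ(λ) + pₖ(λ))/(4·p₁(λ)·p₂(λ)·p₃(λ)) at λ. Then the functions λ ↦ (p₁(λ)+p₂(λ)+p₃(λ))·(p₁(λ)−p₂(λ))² and λ ↦ (p₁(λ)+p₂(λ)+p₃(λ))·(p₁(λ)−p₃(λ))² are constant on I. -/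
lemma const_of_deriv_zero {I : Set ℝ} (hc : Convex ℝ I) {f : ℝ → ℝ}
    (hf : ∀ x ∈ I, HasDerivAt f 0 x) {l m : ℝ} (hl : l ∈ I) (hm : m ∈ I) :
    f l = f m := by
  have := hc.norm_image_sub_le_of_norm_hasDerivWithin_le
    (fun x hx => (hf x hx).hasDerivWithinAt) (C := 0) (by simp) hm hl
  have h := norm_le_zero_iff.mp (by simpa using this : ‖f l - f m‖ ≤ 0)
  exact sub_eq_zero.mp h

/-- conserved quantities of the renormalisation flow: if `p₁, p₂, p₃ > 0`
solve `pᵢ' = −(pⱼ + pₖ)/(4p₁p₂p₃)` on an open interval `I`, then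
`(p₁+p₂+p₃)(p₁−p₂)²` and `(p₁+p₂+p₃)(p₁−p₃)²` are constant on `I`. -/
theorem statement18 (I : Set ℝ) (hIopen : IsOpen I) (hIconn : I.OrdConnected)
    (p1 p2 p3 : ℝ → ℝ)
    (hpos : ∀ l ∈ I, 0 < p1 l ∧ 0 < p2 l ∧ 0 < p3 l)
    (hd1 : ∀ l ∈ I, HasDerivAt p1 (-(p2 l + p3 l) / (4 * p1 l * p2 l * p3 l)) l)
    (hd2 : ∀ l ∈ I, HasDerivAt p2 (-(p3 l + p1 l) / (4 * p1 l * p2 l * p3 l)) l)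
    (hd3 : ∀ l ∈ I, HasDerivAt p3 (-(p1 l + p2 l) / (4 * p1 l * p2 l * p3 l)) l) :
    (∀ l ∈ I, ∀ m ∈ I,
      (p1 l + p2 l + p3 l) * (p1 l - p2 l) ^ 2
        = (p1 m + p2 m + p3 m) * (p1 m - p2 m) ^ 2) ∧
    (∀ l ∈ I, ∀ m ∈ I,
      (p1 l + p2 l + p3 l) * (p1 l - p3 l) ^ 2
        = (p1 m + p2 m + p3 m) * (p1 m - p3 m) ^ 2) := by
  have hc : Convex ℝ I := convex_iff_ordConnected.mpr hIconn
  have key : ∀ q r s : ℝ → ℝ,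
      (∀ l ∈ I, HasDerivAt q (-(r l + s l) / (4 * q l * r l * s l)) l) →
      (∀ l ∈ I, HasDerivAt r (-(s l + q l) / (4 * q l * r l * s l)) l) →
      (∀ l ∈ I, HasDerivAt s (-(q l + r l) / (4 * q l * r l * s l)) l) →
      (∀ l ∈ I, 0 < q l ∧ 0 < r l ∧ 0 < s l) →
      ∀ l ∈ I, ∀ m ∈ I,
        (q l + r l + s l) * (q l - r l) ^ 2
          = (q m + r m + s m) * (q m - r m) ^ 2 := by
    intro q r s hq hr h3 hp l hl m hm
    refine const_of_deriv_zero hc (f := fun l => (q l + r l + s l) * (q l - r l) ^ 2)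
      (fun x hx => ?_) hl hm
    obtain ⟨h1, h2, h3'⟩ := hp x hx
    have hD : HasDerivAt (fun l => (q l + r l + s l) * (q l - r l) ^ 2)
        ((-(r x + s x) / (4 * q x * r x * s x) + -(s x + q x) / (4 * q x * r x * s x)
          + -(q x + r x) / (4 * q x * r x * s x)) * (q x - r x) ^ 2
          + (q x + r x + s x) * (2 * (q x - r x) ^ 1 *
            (-(r x + s x) / (4 * q x * r x * s x) - -(s x + q x) / (4 * q x * r x * s x)))) x :=
      (((hq x hx).add (hr x hx)).add (h3 x hx)).mul
        (((hq x hx).sub (hr x hx)).pow 2)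
    convert hD using 1
    have e1 : q x ≠ 0 := h1.ne'
    have e2 : r x ≠ 0 := h2.ne'
    have e3 : s x ≠ 0 := h3'.ne'
    field_simp
    ring
  refine ⟨key p1 p2 p3 hd1 hd2 hd3 hpos, ?_⟩
  have hq : ∀ l ∈ I, HasDerivAt p1 (-(p3 l + p2 l) / (4 * p1 l * p3 l * p2 l)) l := by
    intro l hl
    have e : -(p2 l + p3 l) / (4 * p1 l * p2 l * p3 l)
        = -(p3 l + p2 l) / (4 * p1 l * p3 l * p2 l) := by ring
    exact e ▸ hd1 l hl
  have hr : ∀ l ∈ I, HasDerivAt p3 (-(p2 l + p1 l) / (4 * p1 l * p3 l * p2 l)) l := by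
    intro l hl
    have e : -(p1 l + p2 l) / (4 * p1 l * p2 l * p3 l)
        = -(p2 l + p1 l) / (4 * p1 l * p3 l * p2 l) := by ring
    exact e ▸ hd3 l hl
  have hs : ∀ l ∈ I, HasDerivAt p2 (-(p1 l + p3 l) / (4 * p1 l * p3 l * p2 l)) l := by
    intro l hl
    have e : -(p3 l + p1 l) / (4 * p1 l * p2 l * p3 l)
        = -(p1 l + p3 l) / (4 * p1 l * p3 l * p2 l) := by ring
    exact e ▸ hd2 l hl
  intro l hl m hm
  have h := key p1 p3 p2 hq hr hs
    (fun l hl => ⟨(hpos l hl).1, (hpos l hl).2.2, (hpos l hl).2.1⟩) l hl m hm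
  linarith [h]
end
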